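/- arXiv:0903.1137 — 5 statements merged into one kernel-verified Lean document; each statement's English description precedes it below -/
import Mathlib

section
/- Monotonicity of the cup rule: let P and P' be weighted profiles over the same finite set of candidates with the same voters and weights and with odd total weight, and let x be a candidate such that for every voter: (i) the voter's vote in P' orders candidates other than x exactly as in P, and (ii) the voter's vote in P' ranks x above every candidate that the voter ranked x above in P. Then for every cup agenda, if x is the cup winner under P, x is also the cup winner under P'. -/
/-!
Monotonicity of the cup rule: if `x` wins the cup under profile `P` and
`P'` is obtained from `P` by each voter keeping the relative order of the
other candidates and only (possibly) improving `x`'s position, then `x`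
still wins under `P'` (odd total weight, any agenda).
-/

namespace Stmt2

attribute [local instance] Classical.propDecidable

/-- Total weight of voters ranking `x` above `y` in profile `R`. -/
noncomputable def wAbove {V C : Type*} [Fintype V]
    (w : V → ℕ) (R : V → C → C → Prop) (x y : C) : ℕ :=
  ∑ v, if R v x y then w v else 0

/-- A cup agenda: a binary tree with candidates at the leaves. -/
inductive Agenda (C : Type*) where
  | leaf : C → Agenda C
  | node : Agenda C → Agenda C → Agenda C

/-- The leaves of an agenda, left to right. -/
def Agenda.leaves {C : Type*} : Agenda C → List C
  | .leaf c => [c]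
  | .node l r => l.leaves ++ r.leaves

/-- The winner of the cup run on agenda `t`: at each internal node the two
sub-winners meet in a pairwise majority election. -/
noncomputable def Agenda.winner {V C : Type*} [Fintype V]
    (w : V → ℕ) (R : V → C → C → Prop) : Agenda C → C
  | .leaf c => c
  | .node l r =>
      if wAbove w R (l.winner w R) (r.winner w R) >
         wAbove w R (r.winner w R) (l.winner w R)
      then l.winner w R else r.winner w R

/-!
Induct on the agenda. As `x` sits at a single leaf, the subtree without `x` only ever compares
candidates other than `x`, on which `P` and `P'` agree, so it sends the same winner `b` to the
final duel against `x`. Raising `x` gains `x` votes against `b` and loses it none, so `x` wins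
that duel again, whether it won it strictly on the left or by a tie on the right.
-/

section

variable {V C : Type*} [Fintype V] (w : V → ℕ)

lemma wAbove_mono {R R' : V → C → C → Prop} {a b : C} (h : ∀ v, R v a b → R' v a b) :
    wAbove w R a b ≤ wAbove w R' a b :=
  Finset.sum_le_sum fun v _ => by
    by_cases hv : R v a b
    · simp [hv, h v hv]
    · simp [hv]

lemma wAbove_congr {R R' : V → C → C → Prop} {a b : C} (h : ∀ v, R v a b ↔ R' v a b) :
    wAbove w R a b = wAbove w R' a b :=
  (wAbove_mono w fun v => (h v).1).antisymm (wAbove_mono w fun v => (h v).2)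

lemma Agenda.winner_mem (R : V → C → C → Prop) (t : Agenda C) : t.winner w R ∈ t.leaves := by
  induction t with
  | leaf c => simp [Agenda.winner, Agenda.leaves]
  | node l r hl hr =>
    simp only [Agenda.winner, Agenda.leaves, List.mem_append]
    split
    · exact Or.inl hl
    · exact Or.inr hr

lemma Agenda.winner_congr {R R' : V → C → C → Prop} (t : Agenda C)
    (h : ∀ v a b, a ∈ t.leaves → b ∈ t.leaves → (R v a b ↔ R' v a b)) :
    t.winner w R = t.winner w R' := by
  induction t with
  | leaf c => rfl
  | node l r hl hr =>
    simp only [Agenda.leaves, List.mem_append] at h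
    have hl' := hl fun v a b ha hb => h v a b (.inl ha) (.inl hb)
    have hr' := hr fun v a b ha hb => h v a b (.inr ha) (.inr hb)
    have hlr := winner_mem w R l
    have hrl := winner_mem w R r
    simp only [Agenda.winner]
    rw [wAbove_congr w fun v => h v _ _ (.inl hlr) (.inr hrl),
      wAbove_congr w fun v => h v _ _ (.inr hrl) (.inl hlr), hl', hr']

end

lemma rel_of_rel_of_lift {C : Type*} {r r' : C → C → Prop} [Std.Trichotomous r] [Std.Asymm r']
    {x b : C} (hup : ∀ a, r x a → r' x a) (hb : b ≠ x) (h : r' b x) : r b x := by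
  rcases trichotomous_of r b x with hbx | rfl | hxb
  · exact hbx
  · exact absurd rfl hb
  · exact absurd (hup b hxb) (asymm h)

lemma wAbove_le_wAbove_of_lift {V C : Type*} [Fintype V] (w : V → ℕ) {P P' : V → C → C → Prop}
    (hP : ∀ v, IsStrictTotalOrder C (P v)) (hP' : ∀ v, IsStrictTotalOrder C (P' v))
    {x b : C} (hup : ∀ v a, P v x a → P' v x a) (hb : b ≠ x) :
    wAbove w P x b ≤ wAbove w P' x b ∧ wAbove w P' b x ≤ wAbove w P b x :=
  ⟨wAbove_mono w fun v => hup v b, wAbove_mono w fun v => by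
    have := hP v
    have := hP' v
    exact rel_of_rel_of_lift (hup v) hb⟩

theorem cup_monotone_general {V C : Type*} [Fintype V]
    (w : V → ℕ)
    (P P' : V → C → C → Prop)
    (hP : ∀ v, IsStrictTotalOrder C (P v))
    (hP' : ∀ v, IsStrictTotalOrder C (P' v))
    (x : C)
    (hsame : ∀ v a b, a ≠ x → b ≠ x → (P' v a b ↔ P v a b))
    (hup : ∀ v a, P v x a → P' v x a)
    (t : Agenda C) (htn : t.leaves.Nodup)
    (hwin : t.winner w P = x) :
    t.winner w P' = x := by
  have stable {s : Agenda C} (hx : x ∉ s.leaves) : s.winner w P' = s.winner w P :=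
    s.winner_congr w fun v a b ha hb => hsame v a b (ne_of_mem_of_not_mem ha hx)
      (ne_of_mem_of_not_mem hb hx)
  induction t with
  | leaf c => exact hwin
  | node l r hl hr =>
    obtain ⟨hln, hrn, hdisj⟩ := List.nodup_append.mp htn
    simp only [Agenda.winner] at hwin ⊢
    split_ifs at hwin with hc
    · have hxr : x ∉ r.leaves := fun h => hdisj x (hwin ▸ l.winner_mem w P) x h rfl
      have hb : r.winner w P ≠ x := ne_of_mem_of_not_mem (r.winner_mem w P) hxr
      obtain ⟨hgain, hloss⟩ := wAbove_le_wAbove_of_lift w hP hP' hup hb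
      rw [hwin] at hc
      rw [hl hln hwin, stable hxr, if_pos (by omega)]
    · have hxl : x ∉ l.leaves := fun h => hdisj x h x (hwin ▸ r.winner_mem w P) rfl
      have hb : l.winner w P ≠ x := ne_of_mem_of_not_mem (l.winner_mem w P) hxl
      obtain ⟨hgain, hloss⟩ := wAbove_le_wAbove_of_lift w hP hP' hup hb
      rw [hwin] at hc
      rw [hr hrn hwin, stable hxl, if_neg (by omega)]

theorem cup_monotone {V C : Type*} [Fintype V] [Fintype C] [DecidableEq C]
    (w : V → ℕ) (hw : ∀ v, 0 < w v)
    (P P' : V → C → C → Prop)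
    (hP : ∀ v, IsStrictTotalOrder C (P v))
    (hP' : ∀ v, IsStrictTotalOrder C (P' v))
    (hodd : Odd (∑ v, w v))
    (x : C)
    (hsame : ∀ v a b, a ≠ x → b ≠ x → (P' v a b ↔ P v a b))
    (hup : ∀ v a, P v x a → P' v x a)
    (t : Agenda C) (htn : t.leaves.Nodup) (hta : ∀ c, c ∈ t.leaves)
    (hwin : t.winner w P = x) :
    t.winner w P' = x :=
  cup_monotone_general w P P' hP hP' x hsame hup t htn hwin

end Stmt2
end

section
/- Let an incomplete weighted profile over a finite set of at least two candidates have odd total weight W. A candidate c is the Condorcet winner in every completion of the profile if and only if for every candidate d ≠ c, the total weight of voters whose partial order ranks c above d is greater than W/2. -/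
/-!
For an incomplete weighted profile with odd total weight `W` over at least
two candidates, `c` is the Condorcet winner in every completion iff for
every other candidate `d`, the weight of voters already ranking `c` above
`d` exceeds `W/2`.
-/

namespace Stmt3

attribute [local instance] Classical.propDecidable

/-- Total weight of voters ranking `x` above `y` in (possibly partial)
profile `R`. -/
noncomputable def wAbove {V C : Type*} [Fintype V]
    (w : V → ℕ) (R : V → C → C → Prop) (x y : C) : ℕ :=
  ∑ v, if R v x y then w v else 0

/-!
In a completion the weights of `c ≻ d` and `d ≻ c` add up to `W`, so `c` beats `d` iff more
than `W/2` of the weight ranks `c` above `d`. That weight is at least the weight already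
ranking `c` above `d` in the partial profile, and it equals it in the completion in which
every voter who has not yet ranked `c` above `d` puts `d` above `c`; such a completion
exists because a strict order in which `c` is not above `d` extends to one with `d` above
`c` (add `d ≻ c` and close transitively), and then, by Szpilrajn, to a strict total order.
-/

section StrictOrderExtension

variable {α : Type*}

theorem exists_isStrictTotalOrder_le (r : α → α → Prop) [IsStrictOrder α r] :
    ∃ s, IsStrictTotalOrder α s ∧ r ≤ s := by
  let _ := partialOrderOfSO r
  refine ⟨fun a b => toLinearExtension a < toLinearExtension b,
    inferInstanceAs (IsStrictTotalOrder (LinearExtension α) (· < ·)), fun a b hab => ?_⟩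
  exact lt_of_le_of_ne (toLinearExtension.monotone (Or.inr hab)) (show a < b from hab).ne

theorem exists_isStrictTotalOrder_le_of_not_rel (r : α → α → Prop) [IsStrictOrder α r]
    {c d : α} (hne : c ≠ d) (hcd : ¬ r c d) :
    ∃ s, IsStrictTotalOrder α s ∧ r ≤ s ∧ s d c := by
  let _ := partialOrderOfSO r
  have hle : ¬ c ≤ d := fun h => h.elim hne hcd
  let r' : α → α → Prop := fun a b => a < b ∨ (a ≤ d ∧ c ≤ b)
  have : IsStrictOrder α r' :=
    { irrefl := fun a h => h.elim (lt_irrefl a) fun h => hle (h.2.trans h.1)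
      trans := by
        rintro a b e (hab | ⟨had, hcb⟩) (hbe | ⟨hbd, hce⟩)
        · exact Or.inl (hab.trans hbe)
        · exact Or.inr ⟨hab.le.trans hbd, hce⟩
        · exact Or.inr ⟨had, hcb.trans hbe.le⟩
        · exact (hle (hcb.trans hbd)).elim }
  obtain ⟨s, hs, hr's⟩ := exists_isStrictTotalOrder_le r'
  exact ⟨s, hs, fun a b hab => hr's a b (Or.inl hab), hr's d c (Or.inr ⟨le_rfl, le_rfl⟩)⟩

theorem exists_isStrictTotalOrder_le_iff_rel (r : α → α → Prop) [IsStrictOrder α r]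
    (c d : α) : ∃ s, IsStrictTotalOrder α s ∧ r ≤ s ∧ (s c d ↔ r c d) := by
  by_cases hcd : r c d ∨ c = d
  · obtain ⟨s, hs, hrs⟩ := exists_isStrictTotalOrder_le r
    refine ⟨s, hs, hrs, ⟨fun h => hcd.resolve_right ?_, hrs c d⟩⟩
    rintro rfl
    exact irrefl c h
  · push Not at hcd
    obtain ⟨s, hs, hrs, hdc⟩ := exists_isStrictTotalOrder_le_of_not_rel r hcd.2 hcd.1
    exact ⟨s, hs, hrs, iff_of_false (asymm hdc) hcd.1⟩

end StrictOrderExtension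

section Weights

variable {V C : Type*} [Fintype V] (w : V → ℕ)

theorem wAbove_mono {R R' : V → C → C → Prop} {x y : C} (h : ∀ v, R v x y → R' v x y) :
    wAbove w R x y ≤ wAbove w R' x y :=
  Finset.sum_le_sum fun v _ => by
    by_cases hv : R v x y <;> simp [hv, h v]

theorem wAbove_add_wAbove {R : V → C → C → Prop} (hR : ∀ v, IsStrictTotalOrder C (R v))
    {x y : C} (hxy : x ≠ y) : wAbove w R x y + wAbove w R y x = ∑ v, w v := by
  rw [wAbove, wAbove, ← Finset.sum_add_distrib]
  refine Finset.sum_congr rfl fun v _ => ?_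
  have := hR v
  rcases trichotomous_of (R v) x y with h | rfl | h
  · simp [h, asymm h]
  · exact (hxy rfl).elim
  · simp [h, asymm h]

theorem wAbove_lt_wAbove_iff {R : V → C → C → Prop} (hR : ∀ v, IsStrictTotalOrder C (R v))
    {x y : C} (hxy : x ≠ y) :
    wAbove w R y x < wAbove w R x y ↔ ∑ v, w v < 2 * wAbove w R x y := by
  have := wAbove_add_wAbove w hR hxy
  omega

theorem exists_completion_wAbove_eq (Q : V → C → C → Prop) (hQ : ∀ v, IsStrictOrder C (Q v))
    (x y : C) :
    ∃ R : V → C → C → Prop, (∀ v, IsStrictTotalOrder C (R v)) ∧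
      (∀ v a b, Q v a b → R v a b) ∧ wAbove w R x y = wAbove w Q x y := by
  choose R hR hQR hRQ using fun v => exists_isStrictTotalOrder_le_iff_rel (Q v) x y
  exact ⟨R, hR, hQR, by simp only [wAbove, hRQ]⟩

end Weights

theorem condorcet_winner_fixed_iff_general {V C : Type*} [Fintype V]
    (w : V → ℕ)
    (Q : V → C → C → Prop) (hQ : ∀ v, IsStrictOrder C (Q v))
    (c : C) :
    (∀ R : V → C → C → Prop,
        (∀ v, IsStrictTotalOrder C (R v)) →
        (∀ v a b, Q v a b → R v a b) →
        ∀ d, d ≠ c → wAbove w R c d > wAbove w R d c)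
    ↔ (∀ d, d ≠ c → (wAbove w Q c d : ℚ) > (∑ v, w v : ℕ) / 2) := by
  have half_lt (n : ℕ) : ((∑ v, w v : ℕ) : ℚ) / 2 < n ↔ ∑ v, w v < 2 * n := by
    rw [div_lt_iff₀ two_pos, mul_comm]
    exact_mod_cast Iff.rfl
  refine ⟨fun h d hdc => ?_, fun h R hR hQR d hdc => ?_⟩
  · obtain ⟨R, hR, hQR, hRQ⟩ := exists_completion_wAbove_eq w Q hQ c d
    have hwin := h R hR hQR d hdc
    rw [gt_iff_lt, wAbove_lt_wAbove_iff w hR hdc.symm, hRQ] at hwin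
    exact (half_lt _).2 hwin
  · rw [gt_iff_lt, wAbove_lt_wAbove_iff w hR hdc.symm]
    exact ((half_lt _).1 (h d hdc)).trans_le
      (Nat.mul_le_mul_left 2 (wAbove_mono w fun v => hQR v c d))

theorem condorcet_winner_fixed_iff {V C : Type*} [Fintype V] [Fintype C] [Nontrivial C]
    (w : V → ℕ) (hw : ∀ v, 0 < w v)
    (hodd : Odd (∑ v, w v))
    (Q : V → C → C → Prop) (hQ : ∀ v, IsStrictOrder C (Q v))
    (c : C) :
    (∀ R : V → C → C → Prop,
        (∀ v, IsStrictTotalOrder C (R v)) →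
        (∀ v a b, Q v a b → R v a b) →
        ∀ d, d ≠ c → wAbove w R c d > wAbove w R d c)
    ↔ (∀ d, d ≠ c → (wAbove w Q c d : ℚ) > (∑ v, w v : ℕ) / 2) :=
  condorcet_winner_fixed_iff_general w Q hQ c

end Stmt3
end

section
/- Let an incomplete weighted profile over a finite set of at least two candidates have odd total weight W. No completion of the profile has a Condorcet winner if and only if for every candidate c there exists a candidate d ≠ c such that the total weight of voters whose partial order ranks d above c is greater than W/2. -/
/-!
If some `d` is already ranked above `c` by a strict majority of the weight, then `d` beats `c` in
every completion, so `c` is never a Condorcet winner. Conversely, if no such `d` exists for some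
`c`, complete every vote by moving `c`, together with everything the voter already ranks above
`c`, to the top. Then `c` is ranked above `d` by every voter not already ranking `d` above `c`,
which is weight at least `W - W/2`; as `W` is odd this is a strict majority, so `c` is a
Condorcet winner.
-/

namespace Stmt4

attribute [local instance] Classical.propDecidable

/-- Total weight of voters ranking `x` above `y` in (possibly partial)
profile `R`. -/
noncomputable def wAbove {V C : Type*} [Fintype V]
    (w : V → ℕ) (R : V → C → C → Prop) (x y : C) : ℕ :=
  ∑ v, if R v x y then w v else 0

section LinearExtension

variable {α : Type*}

/-- **Szpilrajn extension theorem** for strict orders. -/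
theorem exists_isStrictTotalOrder_le (r : α → α → Prop) [IsStrictOrder α r] :
    ∃ s : α → α → Prop, IsStrictTotalOrder α s ∧ r ≤ s := by
  let := partialOrderOfSO r
  refine ⟨((· < ·) : LinearExtension α → LinearExtension α → Prop),
    inferInstanceAs (IsStrictTotalOrder (LinearExtension α) (· < ·)), fun a b hab => ?_⟩
  exact lt_of_le_of_ne (toLinearExtension.monotone (Or.inr hab))
    (ne_of_irrefl (r := r) hab)

/-- `r` with `c`, and everything `r`-above `c`, moved above all remaining elements. -/
def promote (r : α → α → Prop) (c : α) : α → α → Prop :=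
  fun a b => r a b ∨ ((a = c ∨ r a c) ∧ ¬ r b c ∧ b ≠ c)

instance promote.isStrictOrder (r : α → α → Prop) [IsStrictOrder α r] (c : α) :
    IsStrictOrder α (promote r c) where
  irrefl a := by
    rintro (h | ⟨rfl | h, hn, hne⟩)
    exacts [irrefl a h, hne rfl, hn h]
  trans a b e := by
    rintro (hab | ⟨hac, hbc, hbne⟩) (hbe | ⟨rfl | hbc', hec, hene⟩)
    · exact Or.inl (_root_.trans hab hbe)
    · exact Or.inr ⟨Or.inr hab, hec, hene⟩
    · exact Or.inr ⟨Or.inr (_root_.trans hab hbc'), hec, hene⟩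
    · exact Or.inr ⟨hac, fun h => hbc (_root_.trans hbe h), fun h => hbc (h ▸ hbe)⟩
    · exact absurd rfl hbne
    · exact absurd hbc' hbc

theorem le_promote (r : α → α → Prop) (c : α) : r ≤ promote r c :=
  fun _ _ => Or.inl

theorem promote_of_not_rel {r : α → α → Prop} {b c : α} (hb : b ≠ c) (hbc : ¬ r b c) :
    promote r c c b :=
  Or.inr ⟨Or.inl rfl, hbc, hb⟩

theorem exists_isStrictTotalOrder_le_promote (r : α → α → Prop)
    [IsStrictOrder α r] (c : α) :
    ∃ s : α → α → Prop, IsStrictTotalOrder α s ∧ r ≤ s ∧ ∀ b, b ≠ c → ¬ r b c → s c b := by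
  obtain ⟨s, hs, hle⟩ := exists_isStrictTotalOrder_le (promote r c)
  exact ⟨s, hs, (le_promote r c).trans hle,
    fun b hb hbc => hle _ _ (promote_of_not_rel hb hbc)⟩

end LinearExtension

section wAbove

variable {V C : Type*} [Fintype V] (w : V → ℕ)

theorem wAbove_mono {Q R : V → C → C → Prop} (h : ∀ v a b, Q v a b → R v a b) (x y : C) :
    wAbove w Q x y ≤ wAbove w R x y :=
  Finset.sum_le_sum fun v _ => by
    by_cases hq : Q v x y <;> simp [hq, h v x y]

theorem wAbove_add_wAbove_of_ne {R : V → C → C → Prop}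
    (hR : ∀ v, IsStrictTotalOrder C (R v)) {x y : C} (hxy : x ≠ y) :
    wAbove w R x y + wAbove w R y x = ∑ v, w v := by
  rw [wAbove, wAbove, ← Finset.sum_add_distrib]
  refine Finset.sum_congr rfl fun v _ => ?_
  have := hR v
  rcases trichotomous_of (R v) x y with h | rfl | h
  · simp [h, asymm h]
  · exact absurd rfl hxy
  · simp [h, asymm h]

theorem sum_le_wAbove_add_wAbove {Q R : V → C → C → Prop} {x y : C}
    (h : ∀ v, ¬ Q v y x → R v x y) :
    ∑ v, w v ≤ wAbove w R x y + wAbove w Q y x := by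
  rw [wAbove, wAbove, ← Finset.sum_add_distrib]
  refine Finset.sum_le_sum fun v _ => ?_
  by_cases hq : Q v y x <;> simp [hq, h v]

end wAbove

theorem no_condorcet_winner_iff_general {V C : Type*} [Fintype V]
    (w : V → ℕ)
    (hodd : Odd (∑ v, w v))
    (Q : V → C → C → Prop) (hQ : ∀ v, IsStrictOrder C (Q v)) :
    (∀ R : V → C → C → Prop,
        (∀ v, IsStrictTotalOrder C (R v)) →
        (∀ v a b, Q v a b → R v a b) →
        ¬ ∃ c, ∀ d, d ≠ c → wAbove w R c d > wAbove w R d c)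
    ↔ (∀ c : C, ∃ d, d ≠ c ∧ (wAbove w Q d c : ℚ) > (∑ v, w v : ℕ) / 2) := by
  have half_lt (n : ℕ) : ((∑ v, w v : ℕ) : ℚ) / 2 < n ↔ ∑ v, w v < 2 * n := by
    rw [div_lt_iff₀ two_pos, mul_comm]
    norm_cast
  obtain ⟨k, hk⟩ := hodd
  constructor
  · intro hnone c
    by_contra! hc
    choose R hR hQR hcR using fun v =>
      have := hQ v; exists_isStrictTotalOrder_le_promote (Q v) c
    refine hnone R hR hQR ⟨c, fun d hd => ?_⟩
    have hminor := (half_lt _).not.mp (hc d hd).not_gt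
    have hcover := sum_le_wAbove_add_wAbove w (R := R) fun v => hcR v d hd
    have htotal := wAbove_add_wAbove_of_ne w hR hd.symm
    omega
  · rintro hmaj R hR hQR ⟨c, hc⟩
    obtain ⟨d, hd, hgt⟩ := hmaj c
    have hmajor := (half_lt _).mp hgt
    have hmono := wAbove_mono w hQR d c
    have htotal := wAbove_add_wAbove_of_ne w hR hd.symm
    have hwin := hc d hd
    omega

theorem no_condorcet_winner_iff {V C : Type*} [Fintype V] [Fintype C] [Nontrivial C]
    (w : V → ℕ) (hw : ∀ v, 0 < w v)
    (hodd : Odd (∑ v, w v))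
    (Q : V → C → C → Prop) (hQ : ∀ v, IsStrictOrder C (Q v)) :
    (∀ R : V → C → C → Prop,
        (∀ v, IsStrictTotalOrder C (R v)) →
        (∀ v a b, Q v a b → R v a b) →
        ¬ ∃ c, ∀ d, d ≠ c → wAbove w R c d > wAbove w R d c)
    ↔ (∀ c : C, ∃ d, d ≠ c ∧ (wAbove w Q d c : ℚ) > (∑ v, w v : ℕ) / 2) :=
  no_condorcet_winner_iff_general w hodd Q hQ

end Stmt4
end

section
/- Black's theorem for weighted votes: let ≤ be a linear order on a nonempty finite set of candidates, and let a weighted profile have odd total weight with every vote single-peaked with respect to ≤. Then the profile has a Condorcet winner. -/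
/-!
Let `T` be the odd total weight and choose, among the peaks of the voters, a weighted median `c`:
the voters whose peak is `≤ c` and those whose peak is `≥ c` each carry more than half of `T`.
For `d > c` every voter of the first group prefers `c` to `d`, and for `d < c` every voter of
the second group does, so `c` beats every other candidate.
-/

namespace Stmt5

attribute [local instance] Classical.propDecidable

/-- Total weight of voters ranking `x` above `y` in profile `R`. -/
noncomputable def wAbove {V C : Type*} [Fintype V]
    (w : V → ℕ) (R : V → C → C → Prop) (x y : C) : ℕ :=
  ∑ v, if R v x y then w v else 0

/-- A vote `r` (a strict linear order, `r x y` meaning `x` is preferred to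
`y`) is single peaked with respect to the linear order on `C`: its top
candidate `p` satisfies `x ≻ y` whenever `p ≤ x < y` or `y < x ≤ p`. -/
def SinglePeaked {C : Type*} [LinearOrder C] (r : C → C → Prop) : Prop :=
  ∃ p : C, (∀ x, x ≠ p → r p x) ∧
    (∀ x y, p ≤ x → x < y → r x y) ∧
    (∀ x y, y < x → x ≤ p → r x y)

open Finset

section Median

variable {V C : Type*} [Fintype V] [LinearOrder C] (w : V → ℕ) (peak : V → C)

lemma two_mul_sum_filter_peak_lt_lt {T : ℕ} (hodd : Odd T) (c : C)
    (hbelow : ∀ u, peak u < c → 2 * ∑ v with peak v ≤ peak u, w v ≤ T) :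
    2 * ∑ v with peak v < c, w v < T := by
  obtain hB | hB := (univ.filter fun v => peak v < c).eq_empty_or_nonempty
  · rw [hB, sum_empty]
    exact hodd.pos
  obtain ⟨u, hu, hmax⟩ := exists_max_image _ peak hB
  have hsub : ∑ v with peak v < c, w v ≤ ∑ v with peak v ≤ peak u, w v :=
    sum_le_sum_of_subset fun v hv => mem_filter.mpr ⟨mem_univ v, hmax v hv⟩
  have := hbelow u (mem_filter.mp hu).2
  obtain ⟨k, rfl⟩ := hodd
  omega

lemma exists_weighted_median (hodd : Odd (∑ v, w v)) :
    ∃ c, ∑ v, w v < 2 * ∑ v with peak v ≤ c, w v ∧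
      ∑ v, w v < 2 * ∑ v with c ≤ peak v, w v := by
  set T := ∑ v, w v
  set S := univ.filter fun u => T < 2 * ∑ v with peak v ≤ peak u, w v
  have hV : (univ : Finset V).Nonempty := nonempty_of_sum_ne_zero hodd.pos.ne'
  have hS : S.Nonempty := by
    obtain ⟨u, -, hmax⟩ := exists_max_image univ peak hV
    have hall : ∑ v with peak v ≤ peak u, w v = T :=
      congrArg (∑ v ∈ ·, w v) (filter_true_of_mem fun v _ => hmax v (mem_univ v))
    exact ⟨u, mem_filter.mpr ⟨mem_univ u, by rw [hall]; linarith [hodd.pos]⟩⟩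
  obtain ⟨m, hm, hmin⟩ := exists_min_image S peak hS
  refine ⟨peak m, (mem_filter.mp hm).2, ?_⟩
  have hsplit : ∑ v with peak m ≤ peak v, w v + ∑ v with peak v < peak m, w v = T := by
    simpa only [not_le] using sum_filter_add_sum_filter_not univ (fun v => peak m ≤ peak v) w
  have hlow := two_mul_sum_filter_peak_lt_lt w peak hodd (peak m) fun u hu =>
    not_lt.mp fun h => (hmin u (mem_filter.mpr ⟨mem_univ u, h⟩)).not_gt hu
  omega

end Median

section Tally

variable {V C : Type*} [Fintype V] (w : V → ℕ) (R : V → C → C → Prop)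

lemma wAbove_add_wAbove (hR : ∀ v, IsStrictTotalOrder C (R v)) {x y : C} (hxy : x ≠ y) :
    wAbove w R x y + wAbove w R y x = ∑ v, w v := by
  rw [wAbove, wAbove, ← sum_add_distrib]
  refine sum_congr rfl fun v _ => ?_
  have := hR v
  by_cases h : R v x y
  · simp [h, asymm h]
  · simp [h, ((trichotomous x y).resolve_left h).resolve_left hxy]

lemma sum_filter_le_wAbove (p : V → Prop) {x y : C} (hp : ∀ v, p v → R v x y) :
    ∑ v with p v, w v ≤ wAbove w R x y := by
  rw [wAbove, sum_filter]
  gcongr with v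
  split_ifs <;> simp_all

end Tally

theorem black_condorcet_winner_exists_general {V C : Type*} [Fintype V]
    [LinearOrder C]
    (w : V → ℕ)
    (hodd : Odd (∑ v, w v))
    (R : V → C → C → Prop)
    (hR : ∀ v, IsStrictTotalOrder C (R v))
    (hsp : ∀ v, SinglePeaked (R v)) :
    ∃ c : C, ∀ d, d ≠ c → wAbove w R c d > wAbove w R d c := by
  choose peak _ hright hleft using hsp
  obtain ⟨c, hlow, hhigh⟩ := exists_weighted_median w peak hodd
  refine ⟨c, fun d hd => ?_⟩
  have hmajority : ∑ v, w v < 2 * wAbove w R c d := by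
    rcases hd.lt_or_gt with hdc | hcd
    · exact hhigh.trans_le <| Nat.mul_le_mul_left 2 <|
        sum_filter_le_wAbove w R _ fun v hv => hleft v c d hdc hv
    · exact hlow.trans_le <| Nat.mul_le_mul_left 2 <|
        sum_filter_le_wAbove w R _ fun v hv => hright v c d hv hcd
  have := wAbove_add_wAbove w R hR hd.symm
  omega

theorem black_condorcet_winner_exists {V C : Type*} [Fintype V] [Fintype C]
    [Nonempty C] [LinearOrder C]
    (w : V → ℕ) (hw : ∀ v, 0 < w v)
    (hodd : Odd (∑ v, w v))
    (R : V → C → C → Prop)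
    (hR : ∀ v, IsStrictTotalOrder C (R v))
    (hsp : ∀ v, SinglePeaked (R v)) :
    ∃ c : C, ∀ d, d ≠ c → wAbove w R c d > wAbove w R d c :=
  black_condorcet_winner_exists_general w hodd R hR hsp

end Stmt5
end

section
/- Optimality of placing a candidate first for Condorcet manipulation: over a finite set of candidates, fix a family of voters with positive integer weights and fixed votes, together with a coalition of additional voters with positive integer weights whose votes may be chosen freely. If there exists an assignment of votes to the coalition voters under which candidate c is the Condorcet winner of the combined profile, then under every assignment in which each coalition voter ranks c first, c is the Condorcet winner of the combined profile. -/
namespace Stmt10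

attribute [local instance] Classical.propDecidable

/-- Total weight of voters ranking `x` above `y` in profile `R`. -/
noncomputable def wAbove {V C : Type*} [Fintype V]
    (w : V → ℕ) (R : V → C → C → Prop) (x y : C) : ℕ :=
  ∑ v, if R v x y then w v else 0

section wAbove

variable {V C : Type*} [Fintype V] (w : V → ℕ) {R : V → C → C → Prop} {x y : C}

theorem wAbove_le_sum (R : V → C → C → Prop) (x y : C) : wAbove w R x y ≤ ∑ v, w v :=
  Finset.sum_le_sum fun v _ => by split_ifs <;> simp

theorem wAbove_eq_sum_of_forall (h : ∀ v, R v x y) : wAbove w R x y = ∑ v, w v :=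
  Finset.sum_congr rfl fun v _ => if_pos (h v)

theorem wAbove_eq_zero_of_forall_not (h : ∀ v, ¬ R v x y) : wAbove w R x y = 0 :=
  Finset.sum_eq_zero fun v _ => if_neg (h v)

end wAbove

/- Ranking `c` first gives `c` every coalition vote against `d`, the most any assignment can,
and `d` none against `c`, the least any assignment can. -/
theorem condorcet_manipulation_rank_first_general {C V₁ V₂ : Type*}
    [Fintype V₁] [Fintype V₂]
    (w₁ : V₁ → ℕ)
    (w₂ : V₂ → ℕ)
    (P : V₁ → C → C → Prop)
    (c : C)
    (hex : ∃ Q : V₂ → C → C → Prop,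
        (∀ v, IsStrictTotalOrder C (Q v)) ∧
        ∀ d, d ≠ c →
          wAbove w₁ P c d + wAbove w₂ Q c d >
          wAbove w₁ P d c + wAbove w₂ Q d c) :
    ∀ Q : V₂ → C → C → Prop,
      (∀ v, IsStrictTotalOrder C (Q v)) →
      (∀ v a, a ≠ c → Q v c a) →
      ∀ d, d ≠ c →
        wAbove w₁ P c d + wAbove w₂ Q c d >
        wAbove w₁ P d c + wAbove w₂ Q d c := by
  intro Q hQ hQc d hd
  obtain ⟨Q', -, hQ'wins⟩ := hex
  have hcd : wAbove w₂ Q c d = ∑ v, w₂ v := wAbove_eq_sum_of_forall w₂ fun v => hQc v d hd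
  have hdc : wAbove w₂ Q d c = 0 :=
    wAbove_eq_zero_of_forall_not w₂ fun v => asymm (r := Q v) (hQc v d hd)
  have hcd' := wAbove_le_sum w₂ Q' c d
  have := hQ'wins d hd
  omega

theorem condorcet_manipulation_rank_first {C V₁ V₂ : Type*}
    [Fintype C] [Fintype V₁] [Fintype V₂]
    (w₁ : V₁ → ℕ) (hw₁ : ∀ v, 0 < w₁ v)
    (w₂ : V₂ → ℕ) (hw₂ : ∀ v, 0 < w₂ v)
    (P : V₁ → C → C → Prop) (hP : ∀ v, IsStrictTotalOrder C (P v))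
    (c : C)
    (hex : ∃ Q : V₂ → C → C → Prop,
        (∀ v, IsStrictTotalOrder C (Q v)) ∧
        ∀ d, d ≠ c →
          wAbove w₁ P c d + wAbove w₂ Q c d >
          wAbove w₁ P d c + wAbove w₂ Q d c) :
    ∀ Q : V₂ → C → C → Prop,
      (∀ v, IsStrictTotalOrder C (Q v)) →
      (∀ v a, a ≠ c → Q v c a) →
      ∀ d, d ≠ c →
        wAbove w₁ P c d + wAbove w₂ Q c d >
        wAbove w₁ P d c + wAbove w₂ Q d c :=
  condorcet_manipulation_rank_first_general w₁ w₂ P c hex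

end Stmt10
end
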